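/- arXiv:2204.00316 — 8 statements merged into one kernel-verified Lean document; each statement's English description precedes it below -/
import Mathlib

section
/- Let ν > 0 and let ε satisfy 0 < ε < min(1/(2ν), exp(−36/23)), and set γ_ε = νε. Suppose that for some t ∈ (0,∞) and z ∈ ℝ we have |p(z,t) − 1/2| ≤ (5 + γ_ε)/12, and let w ∈ ℝ satisfy |z − w| ≤ ε. Then |p(z,t) − p(w,t)| ≥ |z − w| / (48 ε |log ε|). -/
/-! With `u = (x + νt)/ε` the profile is the logistic function `σ(u)`, whose slope
`σ(1 - σ) = 1/(2 + 2 cosh u)` decreases in `|u|`. Since `νε < 1/2`, the hypothesis on `p(z,t)`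
puts `u_z` in `[-log 23, log 23]`, and `|z - w| ≤ ε` puts `u_w` within distance `1` of it, so by
the mean value theorem the slope between them is at least `1/(2 + 2 cosh (log 23 + 1)) ≥ 23/1728`.
Finally `ε < exp (-36/23)` gives `48 |log ε| ≥ 1728/23`. -/

/-- The one-dimensional travelling wavefront `p(x,t) = (exp(-(x+νt)/ε)+1)⁻¹`. -/
noncomputable def wavefront (ν ε x t : ℝ) : ℝ := (Real.exp (-(x + ν * t) / ε) + 1)⁻¹

open Real Set

namespace Real

lemma sigmoid_mul_one_sub_sigmoid (x : ℝ) :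
    sigmoid x * (1 - sigmoid x) = (2 + 2 * cosh x)⁻¹ := by
  rw [← sigmoid_neg, sigmoid_def, sigmoid_def, cosh_eq, neg_neg]
  field_simp
  have : exp (-x) * exp x = 1 := by rw [← exp_add, neg_add_cancel, exp_zero]
  linear_combination -this

lemma inv_two_add_two_cosh_le_deriv_sigmoid {M x : ℝ} (hx : |x| ≤ M) :
    (2 + 2 * cosh M)⁻¹ ≤ deriv sigmoid x := by
  rw [(hasDerivAt_sigmoid x).deriv, sigmoid_mul_one_sub_sigmoid]
  gcongr
  exact cosh_le_cosh.mpr (hx.trans (le_abs_self M))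

lemma inv_two_add_two_cosh_mul_abs_sub_le_abs_sigmoid_sub {M x y : ℝ} (hx : |x| ≤ M)
    (hy : |y| ≤ M) : (2 + 2 * cosh M)⁻¹ * |x - y| ≤ |sigmoid x - sigmoid y| := by
  wlog hyx : y ≤ x generalizing x y
  · rw [abs_sub_comm x, abs_sub_comm (sigmoid x)]
    exact this hy hx (le_of_not_ge hyx)
  have hderiv : ∀ u ∈ interior (Icc (-M) M), (2 + 2 * cosh M)⁻¹ ≤ deriv sigmoid u := by
    intro u hu
    rw [interior_Icc] at hu
    exact inv_two_add_two_cosh_le_deriv_sigmoid (abs_le.mpr ⟨hu.1.le, hu.2.le⟩)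
  have hmvt := (convex_Icc (-M) M).mul_sub_le_image_sub_of_le_deriv
    continuous_sigmoid.continuousOn differentiable_sigmoid.differentiableOn hderiv
    y (abs_le.mp hy) x (abs_le.mp hx) hyx
  rwa [abs_of_nonneg (sub_nonneg.mpr hyx), abs_of_nonneg (sub_nonneg.mpr (sigmoid_le hyx))]

lemma sigmoid_neg_log {a : ℝ} (ha : 0 < a) : sigmoid (-log a) = (1 + a)⁻¹ := by
  rw [sigmoid_def, neg_neg, exp_log ha]

lemma abs_le_log_of_abs_sigmoid_sub_half_le {a x : ℝ} (ha : 0 < a)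
    (hx : |sigmoid x - 1 / 2| ≤ 1 / 2 - (1 + a)⁻¹) : |x| ≤ log a := by
  have hneg := sigmoid_neg_log ha
  have hpos : sigmoid (log a) = 1 - (1 + a)⁻¹ := by
    rw [← hneg, sigmoid_neg, sub_sub_cancel]
  obtain ⟨hlo, hhi⟩ := abs_le.mp hx
  refine abs_le.mpr ⟨sigmoid_le_iff.mp ?_, sigmoid_le_iff.mp ?_⟩ <;> linarith

end Real

lemma wavefront_eq_sigmoid (ν ε x t : ℝ) :
    wavefront ν ε x t = sigmoid ((x + ν * t) / ε) := by
  rw [wavefront, sigmoid_def, neg_div, add_comm]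

theorem wavefront_slope_general (ν ε : ℝ) (hν : 0 < ν) (hε : 0 < ε)
    (hε' : ε < min (1 / (2 * ν)) (Real.exp (-(36 / 23))))
    (t z : ℝ)
    (hz : |wavefront ν ε z t - 1 / 2| ≤ (5 + ν * ε) / 12)
    (w : ℝ) (hw : |z - w| ≤ ε) :
    |z - w| / (48 * ε * |Real.log ε|) ≤ |wavefront ν ε z t - wavefront ν ε w t| := by
  obtain ⟨hεν, hεlog⟩ := lt_min_iff.mp hε'
  have hνε : ν * ε < 1 / 2 := by
    rw [lt_div_iff₀ (by positivity)] at hεν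
    linarith
  have hlog : 36 / 23 ≤ |log ε| := by
    have hlog_lt := (log_lt_iff_lt_exp hε).mpr hεlog
    rw [abs_of_neg (by linarith)]
    linarith
  simp only [wavefront_eq_sigmoid] at hz ⊢
  set u := (z + ν * t) / ε
  set v := (w + ν * t) / ε
  have huv : |u - v| = |z - w| / ε := by
    rw [← abs_of_pos hε, ← abs_div]
    congr 1
    simp only [u, v]
    ring
  have hu : |u| ≤ log 23 := abs_le_log_of_abs_sigmoid_sub_half_le (by norm_num)
    (hz.trans (by linarith))
  have hv : |v| ≤ log 23 + 1 := by
    have : |u - v| ≤ 1 := by rwa [huv, div_le_one hε]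
    linarith [abs_sub_abs_le_abs_sub v u, abs_sub_comm u v]
  have hcosh : 2 + 2 * cosh (log 23 + 1) ≤ 1728 / 23 := by
    have : exp (-(log 23 + 1)) ≤ 1 :=
      exp_le_one_iff.mpr (by linarith [log_pos (by norm_num : (1 : ℝ) < 23)])
    rw [cosh_eq, exp_add, exp_log (by norm_num)]
    linarith [exp_one_lt_d9]
  calc |z - w| / (48 * ε * |log ε|)
      ≤ |z - w| / (48 * ε * (36 / 23)) := by gcongr
    _ = 23 / 1728 * (|z - w| / ε) := by ring
    _ ≤ (2 + 2 * cosh (log 23 + 1))⁻¹ * |u - v| := by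
        rw [huv, ← inv_div]
        gcongr
    _ ≤ |sigmoid u - sigmoid v| :=
        inv_two_add_two_cosh_mul_abs_sub_le_abs_sigmoid_sub (hu.trans (by linarith)) hv

/-- lower bound on the slope of the wavefront profile near the
interface where `p` takes values close to `1/2`. -/
theorem wavefront_slope (ν ε : ℝ) (hν : 0 < ν) (hε : 0 < ε)
    (hε' : ε < min (1 / (2 * ν)) (Real.exp (-(36 / 23))))
    (t z : ℝ) (ht : 0 < t)
    (hz : |wavefront ν ε z t - 1 / 2| ≤ (5 + ν * ε) / 12)
    (w : ℝ) (hw : |z - w| ≤ ε) :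
    |z - w| / (48 * ε * |Real.log ε|) ≤ |wavefront ν ε z t - wavefront ν ε w t| :=
  wavefront_slope_general ν ε hν hε hε' t z hz w hw
end

section
/- Let γ ∈ (0,1). If 0 ≤ p₁, p₂, p₃ ≤ (1−γ)/2, then g_γ(p₁,p₂,p₃) ≤ max(p₁, p₂, p₃). -/
/-- The voting function `g_γ`. -/
noncomputable def voteg (γ p₁ p₂ p₃ : ℝ) : ℝ :=
  p₁ * p₂ * p₃ + p₁ * p₂ * (1 - p₃) + p₁ * (1 - p₂) * p₃ + (1 - p₁) * p₂ * p₃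
    + (2 * γ / (3 + 3 * γ)) *
      ((1 - p₁) * (1 - p₂) * p₃ + (1 - p₁) * p₂ * (1 - p₃) + p₁ * (1 - p₂) * (1 - p₃))

/-- The diagonal voting function `g_γ(p) := g_γ(p,p,p)`. -/
noncomputable def votegd (γ p : ℝ) : ℝ := voteg γ p p p

lemma voteg_symm (γ a b c : ℝ) : voteg γ a b c = voteg γ b a c ∧ voteg γ a b c = voteg γ c b a := by
  unfold voteg; constructor <;> ring

lemma voteg_key (γ a b c : ℝ) (hγ0 : 0 < γ) (hγ1 : γ < 1) (hb0 : 0 ≤ b) (hc0 : 0 ≤ c)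
    (hba : b ≤ a) (hca : c ≤ a) (ha' : a ≤ (1 - γ) / 2) : voteg γ a b c ≤ a := by
  have ha0 : 0 ≤ a := le_trans hb0 hba
  have ha12 : a < 1/2 := by linarith
  have hd : (0:ℝ) < 3 + 3 * γ := by linarith
  have h3a : (0:ℝ) < 3 - 3 * a := by linarith
  set t := 2 * γ / (3 + 3 * γ) with htdef
  set Y := (1 - a) * (1 - b) * c + (1 - a) * b * (1 - c) + a * (1 - b) * (1 - c) with hY
  have hY0 : 0 ≤ Y := by
    have hb1 : b ≤ 1 := by linarith
    have hc1 : c ≤ 1 := by linarith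
    have ha1 : a ≤ 1 := by linarith
    rw [hY]
    have := mul_nonneg (mul_nonneg (by linarith : (0:ℝ) ≤ 1-a) (by linarith : (0:ℝ) ≤ 1-b)) hc0
    have := mul_nonneg (mul_nonneg (by linarith : (0:ℝ) ≤ 1-a) hb0) (by linarith : (0:ℝ) ≤ 1-c)
    have := mul_nonneg (mul_nonneg ha0 (by linarith : (0:ℝ) ≤ 1-b)) (by linarith : (0:ℝ) ≤ 1-c)
    linarith
  have htle : t ≤ (1 - 2 * a) / (3 - 3 * a) := by
    rw [htdef, div_le_div_iff₀ hd h3a]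
    nlinarith
  have key2 : (1 - 2 * a) / (3 - 3 * a) * Y ≤
      a - (a * b * c + a * b * (1 - c) + a * (1 - b) * c + (1 - a) * b * c) := by
    rw [div_mul_eq_mul_div, div_le_iff₀ h3a]
    nlinarith [mul_nonneg (sub_nonneg.2 hba) (by nlinarith : (0:ℝ) ≤ 1 - a + a^2 + c * (1 - 2*a)),
      mul_nonneg (sub_nonneg.2 hca) (by nlinarith : (0:ℝ) ≤ 1 - a^2)]
  have hfin : t * Y ≤ a - (a * b * c + a * b * (1 - c) + a * (1 - b) * c + (1 - a) * b * c) :=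
    le_trans (mul_le_mul_of_nonneg_right htle hY0) key2
  unfold voteg
  rw [← htdef, ← hY]
  linarith

/-- below the unstable fixed point, `g_γ` is dominated by the max. -/
theorem voteg_le_max (γ : ℝ) (hγ : γ ∈ Set.Ioo (0 : ℝ) 1) (p₁ p₂ p₃ : ℝ)
    (h₁ : 0 ≤ p₁) (h₂ : 0 ≤ p₂) (h₃ : 0 ≤ p₃)
    (h₁' : p₁ ≤ (1 - γ) / 2) (h₂' : p₂ ≤ (1 - γ) / 2) (h₃' : p₃ ≤ (1 - γ) / 2) :
    voteg γ p₁ p₂ p₃ ≤ max p₁ (max p₂ p₃) := by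
  obtain ⟨hγ0, hγ1⟩ := hγ
  rcases le_total p₂ p₁ with h21 | h12
  · rcases le_total p₃ p₁ with h31 | h13
    · exact le_trans (voteg_key γ p₁ p₂ p₃ hγ0 hγ1 h₂ h₃ h21 h31 h₁') (le_max_left _ _)
    · rw [(voteg_symm γ p₁ p₂ p₃).2]
      exact le_trans (voteg_key γ p₃ p₂ p₁ hγ0 hγ1 h₂ h₁ (h21.trans h13) h13 h₃')
        (le_trans (le_max_right _ _) (le_max_right _ _))
  · rcases le_total p₃ p₂ with h32 | h23
    · rw [(voteg_symm γ p₁ p₂ p₃).1]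
      exact le_trans (voteg_key γ p₂ p₁ p₃ hγ0 hγ1 h₁ h₃ h12 h32 h₂')
        (le_trans (le_max_left _ _) (le_max_right _ _))
    · rw [(voteg_symm γ p₁ p₂ p₃).2]
      exact le_trans (voteg_key γ p₃ p₂ p₁ hγ0 hγ1 h₂ h₁ h23 (h12.trans h23) h₃')
        (le_trans (le_max_right _ _) (le_max_right _ _))
end

section
/- Let γ ∈ (0,1). The voting function g_γ is nondecreasing in each of its three arguments on [0,1]³: if 0 ≤ pᵢ ≤ qᵢ ≤ 1 for i = 1,2,3, then g_γ(p₁,p₂,p₃) ≤ g_γ(q₁,q₂,q₃). -/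
lemma voteg_symm12 (γ x y z : ℝ) : voteg γ x y z = voteg γ y x z := by
  unfold voteg; ring

lemma voteg_symm23 (γ x y z : ℝ) : voteg γ x y z = voteg γ x z y := by
  unfold voteg; ring

lemma voteg_mono1 (γ : ℝ) (hγ : γ ∈ Set.Ioo (0 : ℝ) 1)
    (p q a b : ℝ) (hpq : p ≤ q)
    (ha : 0 ≤ a) (ha' : a ≤ 1) (hb : 0 ≤ b) (hb' : b ≤ 1) :
    voteg γ p a b ≤ voteg γ q a b := by
  obtain ⟨hγ0, hγ1⟩ := hγ
  set c : ℝ := 2 * γ / (3 + 3 * γ) with hc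
  have hden : (0:ℝ) < 3 + 3 * γ := by linarith
  have hc0 : 0 < c := div_pos (by linarith) hden
  have hc3 : c ≤ 1 / 3 := by
    rw [hc, div_le_div_iff₀ hden (by norm_num : (0:ℝ) < 3)]; nlinarith
  have key : 0 ≤ (q - p) * ((a + b - 2 * a * b) + c * (1 - 2 * a - 2 * b + 3 * a * b)) := by
    apply mul_nonneg (by linarith)
    nlinarith [mul_nonneg ha hb, mul_nonneg (sub_nonneg.2 ha') (sub_nonneg.2 hb'),
      mul_nonneg ha (sub_nonneg.2 hb'), mul_nonneg hb (sub_nonneg.2 ha')]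
  have e : voteg γ q a b - voteg γ p a b
      = (q - p) * ((a + b - 2 * a * b) + c * (1 - 2 * a - 2 * b + 3 * a * b)) := by
    unfold voteg; rw [← hc]; ring
  linarith

/-- the voting function is nondecreasing in each argument on `[0,1]³`. -/
theorem voteg_monotone (γ : ℝ) (hγ : γ ∈ Set.Ioo (0 : ℝ) 1)
    (p₁ p₂ p₃ q₁ q₂ q₃ : ℝ)
    (h1 : 0 ≤ p₁) (h1' : p₁ ≤ q₁) (h1'' : q₁ ≤ 1)
    (h2 : 0 ≤ p₂) (h2' : p₂ ≤ q₂) (h2'' : q₂ ≤ 1)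
    (h3 : 0 ≤ p₃) (h3' : p₃ ≤ q₃) (h3'' : q₃ ≤ 1) :
    voteg γ p₁ p₂ p₃ ≤ voteg γ q₁ q₂ q₃ := by
  have s1 : voteg γ p₁ p₂ p₃ ≤ voteg γ q₁ p₂ p₃ :=
    voteg_mono1 γ hγ p₁ q₁ p₂ p₃ h1' h2 (le_trans h2' h2'') h3 (le_trans h3' h3'')
  have s2 : voteg γ q₁ p₂ p₃ ≤ voteg γ q₁ q₂ p₃ := by
    rw [voteg_symm12 γ q₁ p₂ p₃, voteg_symm12 γ q₁ q₂ p₃]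
    exact voteg_mono1 γ hγ p₂ q₂ q₁ p₃ h2' (le_trans h1 h1') h1'' h3 (le_trans h3' h3'')
  have s3 : voteg γ q₁ q₂ p₃ ≤ voteg γ q₁ q₂ q₃ := by
    rw [voteg_symm23 γ q₁ q₂ p₃, voteg_symm12 γ q₁ p₃ q₂, voteg_symm23 γ q₁ q₂ q₃,
      voteg_symm12 γ q₁ q₃ q₂]
    exact voteg_mono1 γ hγ p₃ q₃ q₁ q₂ h3' (le_trans h1 h1') h1'' (le_trans h2 h2') h2''
  linarith
end

section
/- Fix ν > 0 and k ∈ ℕ with k ≥ 1. There exist A = A(k) < ∞ and ε̂ = ε̂(k) ∈ (0,1) with νε̂ < 1 such that for all ε ∈ (0, ε̂) and all n ∈ ℕ with n ≥ A|log ε|, the n-fold iterate of the diagonal voting function satisfies g_{νε}^{(n)}((1 − νε)/2 + ε) ≥ 1 − ε^k. -/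
/-!
Writing `p* = (1 - γ) / 2`, the diagonal voting function factors as
`g_γ p = p + 2 / (1 + γ) · p (1 - p) (p - p*)` and `1 - g_γ p = (1 - p)² (1 + 2p / (1 + γ))`.
For `γ ≤ 1/2` the first form shows that, on `[p*, 3/4]`, the distance to `p*` grows by a factor
at least `19/16` per step, so after `O(|log ε|)` steps the orbit of `p* + ε` passes `3/4`.
Above `3/4` the second form shows that `1 - p` shrinks by a factor `3/4` per step, so
`O(k |log ε|)` further steps bring the orbit within `ε^k` of `1`.
-/

open Set Function Real

lemma votegd_eq {γ : ℝ} (p : ℝ) (hγ : 1 + γ ≠ 0) :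
    votegd γ p = p + 2 / (1 + γ) * (p * (1 - p)) * (p - (1 - γ) / 2) := by
  have h3 : (3 : ℝ) + 3 * γ ≠ 0 := by
    rw [show (3 : ℝ) + 3 * γ = 3 * (1 + γ) by ring]; positivity
  unfold votegd voteg
  field_simp
  ring

lemma one_sub_votegd {γ : ℝ} (p : ℝ) (hγ : 1 + γ ≠ 0) :
    1 - votegd γ p = (1 - p) ^ 2 * (1 + 2 / (1 + γ) * p) := by
  rw [votegd_eq p hγ]
  field_simp
  ring

lemma le_votegd {γ p : ℝ} (hγ : 0 < 1 + γ) (hp0 : 0 ≤ p) (hp : (1 - γ) / 2 ≤ p) (hp1 : p ≤ 1) :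
    p ≤ votegd γ p := by
  rw [votegd_eq p hγ.ne']
  have : 0 ≤ 2 / (1 + γ) * (p * (1 - p)) * (p - (1 - γ) / 2) := by
    have : 0 ≤ 1 - p := by linarith
    have : 0 ≤ p - (1 - γ) / 2 := by linarith
    positivity
  linarith

lemma votegd_le_one {γ p : ℝ} (hγ : 0 < 1 + γ) (hp : 0 ≤ p) : votegd γ p ≤ 1 := by
  have := one_sub_votegd p hγ.ne'
  have : 0 ≤ (1 - p) ^ 2 * (1 + 2 / (1 + γ) * p) := by positivity
  linarith

lemma mapsTo_votegd_Icc {γ a : ℝ} (hγ : 0 < 1 + γ) (ha0 : 0 ≤ a) (ha : (1 - γ) / 2 ≤ a) :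
    MapsTo (votegd γ) (Icc a 1) (Icc a 1) := fun _ ⟨hpa, hp1⟩ =>
  ⟨hpa.trans (le_votegd hγ (ha0.trans hpa) (ha.trans hpa) hp1),
    votegd_le_one hγ (ha0.trans hpa)⟩

lemma add_mul_sub_le_votegd {γ p : ℝ} (hγ0 : 0 ≤ γ) (hγ1 : γ ≤ 1 / 2) (hp : (1 - γ) / 2 ≤ p)
    (hp1 : p ≤ 3 / 4) :
    (1 - γ) / 2 + 19 / 16 * (p - (1 - γ) / 2) ≤ votegd γ p := by
  rw [votegd_eq p (by linarith)]
  have hs : 1 ≤ 2 / (1 + γ) := by rw [le_div_iff₀ (by linarith)]; linarith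
  have hpq : 3 / 16 ≤ p * (1 - p) := by nlinarith
  have hd : 0 ≤ p - (1 - γ) / 2 := by linarith
  have : 3 / 16 ≤ 2 / (1 + γ) * (p * (1 - p)) := by nlinarith
  nlinarith

lemma one_sub_votegd_le {γ p : ℝ} (hγ : 0 ≤ γ) (hp : 3 / 4 ≤ p) (hp1 : p ≤ 1) :
    1 - votegd γ p ≤ 3 / 4 * (1 - p) := by
  rw [one_sub_votegd p (by linarith)]
  have hs : 2 / (1 + γ) ≤ 2 := by rw [div_le_iff₀ (by linarith)]; linarith
  have hq : 0 ≤ 1 - p := by linarith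
  have : (1 - p) * (1 + 2 / (1 + γ) * p) ≤ 1 / 4 * 3 :=
    mul_le_mul (by linarith) (by nlinarith) (by positivity) (by norm_num)
  nlinarith

lemma iterate_le_pow_mul_of_mapsTo {α : Type*} {f : α → α} {s : Set α} {u : α → ℝ} {r : ℝ}
    (hr : 0 ≤ r) (hf : MapsTo f s s) (hu : ∀ y ∈ s, u (f y) ≤ r * u y) {x : α} (hx : x ∈ s)
    (m : ℕ) : u (f^[m] x) ≤ r ^ m * u x := by
  induction m with
  | zero => simp
  | succ m ih =>
    rw [iterate_succ_apply', pow_succ']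
    calc u (f (f^[m] x)) ≤ r * u (f^[m] x) := hu _ (hf.iterate m hx)
      _ ≤ r * (r ^ m * u x) := mul_le_mul_of_nonneg_left ih hr
      _ = _ := by ring

lemma min_le_iterate_votegd {γ x : ℝ} (hγ0 : 0 ≤ γ) (hγ1 : γ ≤ 1 / 2)
    (hx : x ∈ Icc ((1 - γ) / 2) 1) (m : ℕ) :
    min (3 / 4) ((1 - γ) / 2 + (19 / 16) ^ m * (x - (1 - γ) / 2)) ≤ (votegd γ)^[m] x := by
  induction m with
  | zero => simp
  | succ m ih =>
    obtain ⟨hy0, hy1⟩ := (mapsTo_votegd_Icc (by linarith) (by linarith) le_rfl).iterate m hx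
    set y := (votegd γ)^[m] x
    rw [iterate_succ_apply']
    rcases le_or_gt (3 / 4) y with hy | hy
    · exact (min_le_left _ _).trans (hy.trans (le_votegd (by linarith) (by linarith) hy0 hy1))
    · have hdist : (1 - γ) / 2 + (19 / 16) ^ m * (x - (1 - γ) / 2) ≤ y := by
        rcases min_le_iff.mp ih with h | h
        · linarith
        · exact h
      refine (min_le_right _ _).trans ?_
      calc (1 - γ) / 2 + (19 / 16) ^ (m + 1) * (x - (1 - γ) / 2)
          = (1 - γ) / 2 + 19 / 16 * ((19 / 16) ^ m * (x - (1 - γ) / 2)) := by ring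
        _ ≤ (1 - γ) / 2 + 19 / 16 * (y - (1 - γ) / 2) := by gcongr; linarith
        _ ≤ votegd γ y := add_mul_sub_le_votegd hγ0 hγ1 hy0 hy.le

lemma one_sub_iterate_votegd_le {γ ε : ℝ} (hγ0 : 0 ≤ γ) (hγ1 : γ ≤ 1 / 2) (hε0 : 0 < ε)
    (hε1 : ε ≤ 1 / 2) {N : ℕ} (hN : 1 ≤ (19 / 16) ^ N * ε) (m : ℕ) :
    1 - (votegd γ)^[m + N] ((1 - γ) / 2 + ε) ≤ (3 / 4) ^ m := by
  have hx : (1 - γ) / 2 + ε ∈ Icc ((1 - γ) / 2) 1 := ⟨by linarith, by linarith⟩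
  have hy := (mapsTo_votegd_Icc (by linarith) (by linarith) le_rfl).iterate N hx
  have hescape : 3 / 4 ≤ (votegd γ)^[N] ((1 - γ) / 2 + ε) := by
    have := min_le_iterate_votegd hγ0 hγ1 hx N
    rw [add_sub_cancel_left, min_eq_left (by linarith)] at this
    exact this
  rw [iterate_add_apply]
  calc _ ≤ (3 / 4) ^ m * (1 - (votegd γ)^[N] ((1 - γ) / 2 + ε)) :=
        iterate_le_pow_mul_of_mapsTo (u := fun p => 1 - p) (by norm_num)
          (mapsTo_votegd_Icc (by linarith) (by norm_num) (by linarith))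
          (fun _ hp => one_sub_votegd_le hγ0 hp.1 hp.2) ⟨hescape, hy.2⟩ m
    _ ≤ (3 / 4) ^ m := mul_le_of_le_one_right (by positivity) (by linarith [hy.1])

lemma exists_add_eq_one_le_pow_mul_and_pow_le {r q ε : ℝ} {n : ℕ} (k : ℕ) (hr : 1 < r)
    (hq0 : 0 < q) (hq1 : q < 1) (hε0 : 0 < ε) (hε1 : ε ≤ exp (-1))
    (hn : (1 / log r + 1 + k / log q⁻¹) * |log ε| ≤ n) :
    ∃ m N : ℕ, n = m + N ∧ 1 ≤ r ^ N * ε ∧ q ^ m ≤ ε ^ k := by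
  have hlogr : 0 < log r := log_pos hr
  have hlogq : 0 < log q⁻¹ := log_pos (one_lt_inv₀ hq0 |>.mpr hq1)
  set L := -log ε with hL
  have hL1 : 1 ≤ L := by have := log_le_log hε0 hε1; rw [log_exp] at this; linarith
  rw [abs_of_neg (by linarith), ← hL,
    show (1 / log r + 1 + k / log q⁻¹) * L = L / log r + L + k * L / log q⁻¹ by ring] at hn
  set N := ⌈L / log r⌉₊
  have hN : L ≤ N * log r := (div_le_iff₀ hlogr).mp (Nat.le_ceil _)
  have hNn : (N : ℝ) + k * L / log q⁻¹ ≤ n := by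
    have := Nat.ceil_lt_add_one (show 0 ≤ L / log r by positivity); linarith
  have hle : N ≤ n := by
    have : 0 ≤ k * L / log q⁻¹ := by positivity
    exact_mod_cast (show (N : ℝ) ≤ n by linarith)
  have hm : k * L ≤ ((n - N : ℕ) : ℝ) * log q⁻¹ := by
    rw [← div_le_iff₀ hlogq]; push_cast [Nat.cast_sub hle]; linarith
  refine ⟨n - N, N, (Nat.sub_add_cancel hle).symm, ?_, ?_⟩
  · rw [← log_nonneg_iff (by positivity), log_mul (by positivity) hε0.ne', log_pow]
    linarith
  · rw [← log_le_log_iff (by positivity) (by positivity), log_pow, log_pow]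
    rw [log_inv] at hm
    linarith

theorem voteg_bias_amplification_up_general (ν : ℝ) (hν : 0 < ν) (k : ℕ) :
    ∃ A : ℝ, ∃ εhat : ℝ, εhat ∈ Set.Ioo (0 : ℝ) 1 ∧ ν * εhat < 1 ∧
      ∀ ε ∈ Set.Ioo (0 : ℝ) εhat, ∀ n : ℕ, A * |Real.log ε| ≤ (n : ℝ) →
        1 - ε ^ k ≤ (fun x => votegd (ν * ε) x)^[n] ((1 - ν * ε) / 2 + ε) := by
  have hexp : exp (-1) < 1 / 2 := exp_neg_one_lt_half
  have hνεhat : ν * min (exp (-1)) (1 / (2 * ν)) ≤ 1 / 2 := by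
    calc _ ≤ ν * (1 / (2 * ν)) := by gcongr; exact min_le_right _ _
      _ = 1 / 2 := by field_simp
  refine ⟨1 / log (19 / 16) + 1 + k / log (3 / 4)⁻¹, min (exp (-1)) (1 / (2 * ν)),
    ⟨by positivity, by linarith [min_le_left (exp (-1)) (1 / (2 * ν))]⟩, by linarith, ?_⟩
  rintro ε ⟨hε0, hε⟩ n hn
  obtain ⟨m, N, rfl, hN, hm⟩ := exists_add_eq_one_le_pow_mul_and_pow_le k (by norm_num)
    (by norm_num) (by norm_num) hε0 (hε.le.trans (min_le_left _ _)) hn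
  have hγ : ν * ε ≤ 1 / 2 := hνεhat.trans' (by gcongr)
  have := one_sub_iterate_votegd_le (by positivity) hγ hε0
    (by linarith [min_le_left (exp (-1)) (1 / (2 * ν))]) hN m
  linarith

/-- bias amplification above the unstable fixed point: after
`O(|log ε|)` iterations of `g_{νε}` starting from `(1-νε)/2 + ε`, the value is
within `ε^k` of `1`. -/
theorem voteg_bias_amplification_up (ν : ℝ) (hν : 0 < ν) (k : ℕ) (hk : 1 ≤ k) :
    ∃ A : ℝ, ∃ εhat : ℝ, εhat ∈ Set.Ioo (0 : ℝ) 1 ∧ ν * εhat < 1 ∧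
      ∀ ε ∈ Set.Ioo (0 : ℝ) εhat, ∀ n : ℕ, A * |Real.log ε| ≤ (n : ℝ) →
        1 - ε ^ k ≤ (fun x => votegd (ν * ε) x)^[n] ((1 - ν * ε) / 2 + ε) :=
  voteg_bias_amplification_up_general ν hν k
end

section
/- Let γ ∈ (0,1). (i) For every δ ∈ ℝ, g_γ(δ) = (δ/(1+γ)) · ((3−γ)δ + 2γ − 2δ²). (ii) Set a_{γ,0} := (1/(1+γ)) · ((3−γ)(1/2 − √((1+γ²)/8)) + 2γ). Then 0 < a_{γ,0} < 1, and for every δ ∈ [0, 1/2 − √((1+γ²)/8)] one has g_γ(δ) ≤ a_{γ,0} · δ. -/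
/-- the identity `g_γ(δ) = (δ/(1+γ))((3-γ)δ + 2γ - 2δ²)` and the
linear contraction estimate near the stable fixed point `0`. -/
theorem voteg_contraction_near_zero (γ : ℝ) (hγ : γ ∈ Set.Ioo (0 : ℝ) 1) :
    (∀ δ : ℝ, votegd γ δ = (δ / (1 + γ)) * ((3 - γ) * δ + 2 * γ - 2 * δ ^ 2)) ∧
    (0 < (1 / (1 + γ)) * ((3 - γ) * (1 / 2 - Real.sqrt ((1 + γ ^ 2) / 8)) + 2 * γ)) ∧
    ((1 / (1 + γ)) * ((3 - γ) * (1 / 2 - Real.sqrt ((1 + γ ^ 2) / 8)) + 2 * γ) < 1) ∧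
    (∀ δ ∈ Set.Icc (0 : ℝ) (1 / 2 - Real.sqrt ((1 + γ ^ 2) / 8)),
      votegd γ δ ≤
        ((1 / (1 + γ)) * ((3 - γ) * (1 / 2 - Real.sqrt ((1 + γ ^ 2) / 8)) + 2 * γ)) * δ) := by
  obtain ⟨hγ0, hγ1⟩ := hγ
  have h1γ : (0:ℝ) < 1 + γ := by linarith
  have h3γ : (3:ℝ) + 3 * γ ≠ 0 := by positivity
  set s : ℝ := Real.sqrt ((1 + γ ^ 2) / 8) with hs
  have hs0 : 0 ≤ s := Real.sqrt_nonneg _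
  have hs2 : s ^ 2 = (1 + γ ^ 2) / 8 := Real.sq_sqrt (by positivity)
  have hs_half : s < 1 / 2 := by
    nlinarith [hs2, sq_nonneg (s - 1/2)]
  have hkey : (1 + γ) / 2 < (3 - γ) * s := by
    nlinarith [hs2, hs0, sq_nonneg (γ - 1), mul_pos hγ0 hγ0,
      mul_nonneg hs0 (sq_nonneg (γ - 1)), sq_nonneg ((3 - γ) * s - (1 + γ) / 2),
      sq_nonneg ((3 - γ) * s + (1 + γ) / 2)]
  have hid : ∀ δ : ℝ, votegd γ δ = (δ / (1 + γ)) * ((3 - γ) * δ + 2 * γ - 2 * δ ^ 2) := by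
    intro δ
    unfold votegd voteg
    field_simp
    ring
  refine ⟨hid, ?_, ?_, ?_⟩
  · apply mul_pos (by positivity)
    nlinarith
  · rw [mul_comm, mul_one_div, div_lt_one h1γ]
    nlinarith
  · rintro δ ⟨hδ0, hδ1⟩
    rw [hid δ]
    have : (1 / (1 + γ)) * ((3 - γ) * (1 / 2 - s) + 2 * γ) * δ
        = (δ / (1 + γ)) * ((3 - γ) * (1 / 2 - s) + 2 * γ) := by ring
    rw [this]
    apply mul_le_mul_of_nonneg_left _ (by positivity)
    nlinarith [sq_nonneg δ]
end

section
/- Let γ ∈ (0,1) and let δ ∈ ℝ satisfy δ² + γ|δ| ≤ (1−γ²)/8. Then (1−γ)/2 + δ ∈ [0,1], and: if δ ≥ 0 then g_γ((1−γ)/2 + δ) ≥ (1−γ)/2 + ((5−γ)/4) δ, while if δ ≤ 0 then g_γ((1−γ)/2 + δ) ≤ (1−γ)/2 + ((5−γ)/4) δ. In particular, near the unstable fixed point (1−γ)/2, each application of g_γ multiplies the deviation from (1−γ)/2 by at least (5−γ)/4 > 1. -/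
/-- escape estimate from the unstable fixed point `(1-γ)/2`:
each application of `g_γ` multiplies the deviation by at least `(5-γ)/4 > 1`. -/
theorem voteg_escape_unstable (γ δ : ℝ) (hγ : γ ∈ Set.Ioo (0 : ℝ) 1)
    (hδ : δ ^ 2 + γ * |δ| ≤ (1 - γ ^ 2) / 8) :
    ((1 - γ) / 2 + δ) ∈ Set.Icc (0 : ℝ) 1 ∧
    (0 ≤ δ → (1 - γ) / 2 + ((5 - γ) / 4) * δ ≤ votegd γ ((1 - γ) / 2 + δ)) ∧
    (δ ≤ 0 → votegd γ ((1 - γ) / 2 + δ) ≤ (1 - γ) / 2 + ((5 - γ) / 4) * δ) := by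
  obtain ⟨hγ0, hγ1⟩ := hγ
  have h3 : (3 : ℝ) + 3 * γ > 0 := by linarith
  have hne : (3 : ℝ) + 3 * γ ≠ 0 := ne_of_gt h3
  have habs : |δ| ≤ (1 - γ) / 2 := by
    by_contra h
    push_neg at h
    have h0 : (0:ℝ) ≤ |δ| := abs_nonneg δ
    nlinarith [sq_abs δ]
  have hle : δ ≤ (1 - γ) / 2 := le_trans (le_abs_self δ) habs
  have hge : -((1 - γ) / 2) ≤ δ := by
    have := neg_abs_le δ; linarith
  have key : votegd γ ((1 - γ) / 2 + δ) - ((1 - γ) / 2 + ((5 - γ) / 4) * δ)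
      = (6 * δ * ((1 - γ ^ 2) / 8 + γ * δ - δ ^ 2)) / (3 + 3 * γ) := by
    unfold votegd voteg
    field_simp
    ring
  refine ⟨⟨by linarith, by linarith⟩, ?_, ?_⟩
  · intro hδ0
    rw [abs_of_nonneg hδ0] at hδ
    have h1 : 0 ≤ 6 * δ * ((1 - γ ^ 2) / 8 + γ * δ - δ ^ 2) := by
      apply mul_nonneg (by linarith)
      nlinarith [mul_nonneg hγ0.le hδ0]
    nlinarith [div_nonneg h1 h3.le, key]
  · intro hδ0
    rw [abs_of_nonpos hδ0] at hδ
    have h1 : 6 * δ * ((1 - γ ^ 2) / 8 + γ * δ - δ ^ 2) ≤ 0 := by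
      apply mul_nonpos_of_nonpos_of_nonneg (by linarith)
      nlinarith
    nlinarith [div_nonpos_of_nonpos_of_nonneg h1 h3.le, key]
end

section
/- Let γ ∈ (0,1). The set of solutions in [0,1] of the fixed-point equation g_γ(p) = p is exactly {0, (1−γ)/2, 1}. Moreover g_γ(p) < p for all p ∈ (0, (1−γ)/2), and g_γ(p) > p for all p ∈ ((1−γ)/2, 1). -/
/-! `g_γ(p) - p` is the bistable cubic `p (1 - p) (2p - (1 - γ))` divided by `1 + γ`, so
everything follows from the signs of its three factors. -/

section
variable {γ p : ℝ}

lemma votegd_sub_self (hγ : γ ≠ -1) (p : ℝ) :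
    votegd γ p - p = p * (1 - p) * (2 * p - (1 - γ)) / (1 + γ) := by
  have h₁ : (1 : ℝ) + γ ≠ 0 := fun h ↦ hγ (by linarith)
  have h₃ : (3 : ℝ) + 3 * γ ≠ 0 := fun h ↦ hγ (by linarith)
  unfold votegd voteg
  field_simp
  ring

lemma votegd_eq_self_iff (hγ : γ ≠ -1) :
    votegd γ p = p ↔ p = 0 ∨ p = (1 - γ) / 2 ∨ p = 1 := by
  have h₁ : (1 : ℝ) + γ ≠ 0 := fun h ↦ hγ (by linarith)
  rw [← sub_eq_zero, votegd_sub_self hγ, div_eq_zero_iff, or_iff_left h₁,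
    mul_eq_zero, mul_eq_zero, sub_eq_zero, sub_eq_zero, eq_div_iff two_ne_zero]
  constructor
  · rintro ((h | h) | h)
    exacts [Or.inl h, Or.inr (Or.inr h.symm), Or.inr (Or.inl (by linarith))]
  · rintro (h | h | h)
    exacts [Or.inl (Or.inl h), Or.inr (by linarith), Or.inl (Or.inr h.symm)]

lemma votegd_lt_self (hγ : -1 < γ) (hp₀ : 0 < p) (hp : p < (1 - γ) / 2) :
    votegd γ p < p := by
  have hcubic : p * (1 - p) * (2 * p - (1 - γ)) < 0 :=
    mul_neg_of_pos_of_neg (mul_pos hp₀ (by linarith)) (by linarith)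
  rw [← sub_neg, votegd_sub_self hγ.ne']
  exact div_neg_of_neg_of_pos hcubic (by linarith)

lemma lt_votegd_self (hγ : -1 < γ) (hγ₁ : γ < 1) (hp : (1 - γ) / 2 < p) (hp₁ : p < 1) :
    p < votegd γ p := by
  have hcubic : 0 < p * (1 - p) * (2 * p - (1 - γ)) :=
    mul_pos (mul_pos (by linarith) (by linarith)) (by linarith)
  rw [← sub_pos, votegd_sub_self hγ.ne']
  exact div_pos hcubic (by linarith)

end

/-- on `[0,1]` the fixed points of `g_γ` are exactly
`0, (1-γ)/2, 1`, with `g_γ(p) < p` on `(0,(1-γ)/2)` and `g_γ(p) > p` on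
`((1-γ)/2, 1)`. -/
theorem voteg_fixed_points (γ : ℝ) (hγ : γ ∈ Set.Ioo (0 : ℝ) 1) :
    ({p : ℝ | p ∈ Set.Icc (0 : ℝ) 1 ∧ votegd γ p = p} =
      {0, (1 - γ) / 2, 1}) ∧
    (∀ p ∈ Set.Ioo (0 : ℝ) ((1 - γ) / 2), votegd γ p < p) ∧
    (∀ p ∈ Set.Ioo ((1 - γ) / 2) (1 : ℝ), p < votegd γ p) := by
  obtain ⟨hγ₀, hγ₁⟩ := hγ
  have hγ' : -1 < γ := by linarith
  refine ⟨?_, fun p hp ↦ votegd_lt_self hγ' hp.1 hp.2,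
    fun p hp ↦ lt_votegd_self hγ' hγ₁ hp.1 hp.2⟩
  ext p
  simp only [Set.mem_ofPred_eq, Set.mem_insert_iff, Set.mem_singleton_iff,
    votegd_eq_self_iff hγ'.ne', Set.mem_Icc]
  refine ⟨fun h ↦ h.2, fun h ↦ ⟨?_, h⟩⟩
  rcases h with rfl | rfl | rfl <;> constructor <;> linarith
end

section
/- Let d ≥ 1, ρ > 0 and v > 0. There exists a constant C > 0 (depending only on d, ρ and v) such that for every x ∈ ℝ^d and every δ ∈ (0, ρ]: ∫_{{y ∈ ℝ^d : | ‖y‖ − ρ | ≤ δ}} (2πv)^{−d/2} exp(−‖y − x‖²/(2v)) dy ≤ C δ. -/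
open MeasureTheory Measure Metric Module

/-!
The Gaussian density is bounded by its peak value `(2πv)^(-d/2)`, so the integral is at most that
value times the Lebesgue measure of the annulus. The annulus is
`closedBall 0 (ρ + δ) \ ball 0 (ρ - δ)`, of measure `((ρ + δ)^d - (ρ - δ)^d) · vol(ball 0 1)`,
and `(ρ + δ)^d - (ρ - δ)^d ≤ 2δ · d · (2ρ)^(d-1)` since `x ↦ x^d` has slope at most `d (2ρ)^(d-1)` on `[0, 2ρ]`.
-/

section Annulus

variable {E : Type*} [NormedAddCommGroup E]

lemma setOf_abs_norm_sub_le_eq_closedBall_sdiff_ball (ρ δ : ℝ) :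
    {y : E | |‖y‖ - ρ| ≤ δ} = closedBall 0 (ρ + δ) \ ball 0 (ρ - δ) := by
  ext y
  simp only [Set.mem_ofPred_eq, Set.mem_sdiff, mem_closedBall, mem_ball, dist_zero_right, abs_le,
    not_lt]
  constructor <;> rintro ⟨h₁, h₂⟩ <;> constructor <;> linarith

variable [NormedSpace ℝ E] [FiniteDimensional ℝ E] [MeasurableSpace E] [BorelSpace E]
  [Nontrivial E] (μ : Measure E) [μ.IsAddHaarMeasure]

lemma addHaar_real_closedBall_sdiff_ball {r s : ℝ} (hs : 0 ≤ s) (hsr : s ≤ r) :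
    μ.real (closedBall (0 : E) r \ ball 0 s) =
      (r ^ finrank ℝ E - s ^ finrank ℝ E) * μ.real (ball 0 1) := by
  rw [measureReal_sdiff (ball_subset_closedBall.trans (closedBall_subset_closedBall hsr))
      measurableSet_ball measure_closedBall_lt_top.ne,
    ← addHaar_real_closedBall_eq_addHaar_real_ball, addHaar_real_closedBall μ 0 (hs.trans hsr),
    addHaar_real_closedBall μ 0 hs]
  ring

lemma addHaar_real_annulus_le {ρ δ : ℝ} (hδ : 0 ≤ δ) (hδρ : δ ≤ ρ) :
    μ.real {y : E | |‖y‖ - ρ| ≤ δ} ≤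
      2 * finrank ℝ E * (2 * ρ) ^ (finrank ℝ E - 1) * μ.real (ball 0 1) * δ := by
  rw [setOf_abs_norm_sub_le_eq_closedBall_sdiff_ball,
    addHaar_real_closedBall_sdiff_ball μ (by linarith) (by linarith)]
  have hpow : (ρ + δ) ^ finrank ℝ E - (ρ - δ) ^ finrank ℝ E ≤
      2 * δ * finrank ℝ E * (2 * ρ) ^ (finrank ℝ E - 1) := by
    refine (le_abs_self _).trans ((abs_pow_sub_pow_le _ _ _).trans ?_)
    rw [abs_of_nonneg (by linarith : 0 ≤ ρ + δ), abs_of_nonneg (by linarith : 0 ≤ ρ - δ),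
      max_eq_left (by linarith), show ρ + δ - (ρ - δ) = 2 * δ by ring,
      abs_of_nonneg (by linarith)]
    gcongr
    · linarith
    · linarith
  calc _ ≤ 2 * δ * finrank ℝ E * (2 * ρ) ^ (finrank ℝ E - 1) * μ.real (ball 0 1) := by
        gcongr
    _ = _ := by ring

end Annulus

/-- Gaussian anticoncentration near the sphere of radius `ρ`:
the Gaussian mass of the annulus `{ | ‖y‖ - ρ | ≤ δ }` is at most `C δ`,
uniformly in the Gaussian mean `x`. -/
theorem gaussian_annulus_anticoncentration (d : ℕ) (hd : 1 ≤ d) (ρ v : ℝ)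
    (hρ : 0 < ρ) (hv : 0 < v) :
    ∃ C : ℝ, 0 < C ∧
      ∀ x : EuclideanSpace ℝ (Fin d), ∀ δ : ℝ, δ ∈ Set.Ioc (0 : ℝ) ρ →
        (∫ y in {y : EuclideanSpace ℝ (Fin d) | |‖y‖ - ρ| ≤ δ},
            (2 * Real.pi * v) ^ (-(d : ℝ) / 2) * Real.exp (-‖y - x‖ ^ 2 / (2 * v)))
          ≤ C * δ := by
  have : Nontrivial (EuclideanSpace ℝ (Fin d)) :=
    Module.nontrivial_of_finrank_pos (R := ℝ) (by rw [finrank_euclideanSpace_fin]; omega)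
  set K := (2 * Real.pi * v) ^ (-(d : ℝ) / 2)
  set B := volume.real (ball (0 : EuclideanSpace ℝ (Fin d)) 1)
  have hK : 0 < K := by positivity
  have hB : 0 < B := ENNReal.toReal_pos (measure_ball_pos _ _ one_pos).ne' measure_ball_lt_top.ne
  refine ⟨K * (2 * d * (2 * ρ) ^ (d - 1) * B), by positivity, ?_⟩
  rintro x δ ⟨hδ, hδρ⟩
  have hdensity (y : EuclideanSpace ℝ (Fin d)) :
      ‖K * Real.exp (-‖y - x‖ ^ 2 / (2 * v))‖ ≤ K := by
    rw [Real.norm_of_nonneg (by positivity)]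
    refine mul_le_of_le_one_right hK.le (Real.exp_le_one_iff.2 ?_)
    exact div_nonpos_of_nonpos_of_nonneg (by simp) (by positivity)
  have hfinite : volume {y : EuclideanSpace ℝ (Fin d) | |‖y‖ - ρ| ≤ δ} < ⊤ := by
    rw [setOf_abs_norm_sub_le_eq_closedBall_sdiff_ball]
    exact (measure_mono Set.sdiff_subset).trans_lt measure_closedBall_lt_top
  calc _ ≤ K * volume.real {y : EuclideanSpace ℝ (Fin d) | |‖y‖ - ρ| ≤ δ} :=
        (le_abs_self _).trans (norm_setIntegral_le_of_norm_le_const hfinite fun y _ ↦ hdensity y)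
    _ ≤ K * (2 * d * (2 * ρ) ^ (d - 1) * B * δ) := by
        gcongr
        simpa using addHaar_real_annulus_le (E := EuclideanSpace ℝ (Fin d)) volume hδ.le hδρ
    _ = _ := by ring
end
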